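/- Let A be a tensor with nonpositive off-diagonal entries. Then A is an M-tensor if and only if all real eigenvalues of A are positive. -/

import Mathlib

open scoped BigOperators

/-- Action of an `(k+1)`-order `n`-dimensional real tensor on a complex vector:
`(A x^{m-1})_i = ∑_{i2,...,im} A_{i i2...im} x_{i2} ⋯ x_{im}` (here `k = m-1`). -/
noncomputable def tApplyC {n k : ℕ} (A : Fin n → (Fin k → Fin n) → ℝ) (x : Fin n → ℂ) (i : Fin n) : ℂ :=
  ∑ j : Fin k → Fin n, (A i j : ℂ) * ∏ t, x (j t)

/-- Real version of the tensor action. -/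
def tApplyR {n k : ℕ} (A : Fin n → (Fin k → Fin n) → ℝ) (x : Fin n → ℝ) (i : Fin n) : ℝ :=
  ∑ j : Fin k → Fin n, A i j * ∏ t, x (j t)

/-- `(lam, x)` is an eigenvalue-eigenvector pair: `x ≠ 0` and `A x^{m-1} = lam x^{[m-1]}`. -/
def IsEigPair {n k : ℕ} (A : Fin n → (Fin k → Fin n) → ℝ) (lam : ℂ) (x : Fin n → ℂ) : Prop :=
  x ≠ 0 ∧ ∀ i, tApplyC A x i = lam * x i ^ k

/-- `lam` is an eigenvalue of `A`. -/
def IsEig {n k : ℕ} (A : Fin n → (Fin k → Fin n) → ℝ) (lam : ℂ) : Prop :=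
  ∃ x, IsEigPair A lam x

/-- The set of moduli of eigenvalues of `A`. -/
def modSet {n k : ℕ} (A : Fin n → (Fin k → Fin n) → ℝ) : Set ℝ :=
  {r | ∃ lam, IsEig A lam ∧ r = ‖lam‖}

/-- The spectral radius: supremum of moduli of eigenvalues. -/
noncomputable def specRad {n k : ℕ} (A : Fin n → (Fin k → Fin n) → ℝ) : ℝ :=
  sSup (modSet A)

/-- The identity tensor: entries `δ_{i i2...im}`. -/
noncomputable def idT (n k : ℕ) : Fin n → (Fin k → Fin n) → ℝ :=
  fun i j => if (∀ t, j t = i) then 1 else 0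

/-- Entrywise nonnegative tensor. -/
def NonnegT {n k : ℕ} (A : Fin n → (Fin k → Fin n) → ℝ) : Prop := ∀ i j, 0 ≤ A i j

/-- `A` is an M-tensor: `A = c I - B` with `B ≥ 0` and `c > ρ(B)`. -/
def IsMTensor {n k : ℕ} (A : Fin n → (Fin k → Fin n) → ℝ) : Prop :=
  ∃ (B : Fin n → (Fin k → Fin n) → ℝ) (c : ℝ),
    NonnegT B ∧ specRad B < c ∧ ∀ i j, A i j = c * idT n k i j - B i j

/-- `ρ(A)` is an eigenvalue of `A` and bounds the modulus of every eigenvalue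
(the Yang–Yang theorem for nonnegative tensors). -/
def HasSpecRad {n k : ℕ} (A : Fin n → (Fin k → Fin n) → ℝ) : Prop :=
  IsEig A (specRad A) ∧ ∀ lam, IsEig A lam → ‖lam‖ ≤ specRad A

/-- Off-diagonal entries of `A` are all nonpositive (`A ∈ 𝕫`). -/
def ZTensor {n k : ℕ} (A : Fin n → (Fin k → Fin n) → ℝ) : Prop :=
  ∀ i j, (¬ ∀ t, j t = i) → A i j ≤ 0

/-- Irreducibility of a tensor. -/
def IrreducibleT {n k : ℕ} (A : Fin n → (Fin k → Fin n) → ℝ) : Prop :=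
  ¬ ∃ S : Set (Fin n), S.Nonempty ∧ S ≠ Set.univ ∧
      ∀ i ∈ S, ∀ j : Fin k → Fin n, (∀ t, j t ∉ S) → A i j = 0

/-- `C_i = ∑_{(i2,...,im) not all equal to i} |A_{i i2...im}|`. -/
noncomputable def offDiagSum {n k : ℕ} (A : Fin n → (Fin k → Fin n) → ℝ) (i : Fin n) : ℝ :=
  ∑ j ∈ Finset.univ.filter (fun j : Fin k → Fin n => ¬ ∀ t, j t = i), |A i j|

/-!
If `A = c I - B` then `A` and `B` share eigenvectors and `λ ↦ c - λ` matches their eigenvalues.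
For an M-tensor a real eigenvalue `λ` of `A` thus gives `|c - λ| ≤ ρ(B) < c`, so `λ > 0`.
Conversely, a Z-tensor is `c I - B` with `B ≥ 0` once `c` dominates the diagonal, and
`c - ρ(B)` is then a real eigenvalue of `A`, so its positivity is exactly `ρ(B) < c`.
-/

lemma tApplyC_idT {n k : ℕ} (x : Fin n → ℂ) (i : Fin n) :
    tApplyC (idT n k) x i = x i ^ k := by
  unfold tApplyC idT
  rw [Finset.sum_eq_single (fun _ => i)]
  · simp [Finset.prod_const]
  · intro j _ hj
    rw [if_neg fun h => hj (funext h), Complex.ofReal_zero, zero_mul]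
  · simp

section Shift

variable {n k : ℕ} {A B : Fin n → (Fin k → Fin n) → ℝ} {c : ℝ}

lemma tApplyC_of_eq_smul_idT_sub (hAB : ∀ i j, A i j = c * idT n k i j - B i j)
    (x : Fin n → ℂ) (i : Fin n) :
    tApplyC A x i = c * x i ^ k - tApplyC B x i := by
  rw [← tApplyC_idT (k := k) x i]
  simp only [tApplyC, hAB, Finset.mul_sum, ← Finset.sum_sub_distrib]
  refine Finset.sum_congr rfl fun j _ => ?_
  push_cast
  ring

lemma isEig_iff_of_eq_smul_idT_sub (hAB : ∀ i j, A i j = c * idT n k i j - B i j) (μ : ℂ) :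
    IsEig A μ ↔ IsEig B (c - μ) := by
  have hpair : ∀ x i, tApplyC A x i = μ * x i ^ k ↔ tApplyC B x i = (c - μ) * x i ^ k := by
    intro x i
    rw [tApplyC_of_eq_smul_idT_sub hAB]
    constructor <;> intro h <;> linear_combination -h
  simp only [IsEig, IsEigPair, hpair]

end Shift

lemma ZTensor.nonnegT_smul_idT_sub {n k : ℕ} {A : Fin n → (Fin k → Fin n) → ℝ}
    (hZ : ZTensor A) {c : ℝ} (hc : ∀ i, A i (fun _ => i) ≤ c) :
    NonnegT (fun i j => c * idT n k i j - A i j) := by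
  intro i j
  by_cases hd : ∀ t, j t = i
  · obtain rfl : j = fun _ => i := funext hd
    simpa [idT] using hc i
  · simpa [idT, hd] using hZ i j hd

/-- a tensor in `𝕫` is an M-tensor iff all its real eigenvalues are positive
(assuming Yang–Yang for nonnegative tensors). -/
theorem mTensor_iff_real_eig_pos {n k : ℕ} (A : Fin n → (Fin k → Fin n) → ℝ) (hZ : ZTensor A)
    (hYY : ∀ B : Fin n → (Fin k → Fin n) → ℝ, NonnegT B → HasSpecRad B) :
    IsMTensor A ↔ ∀ lam : ℝ, IsEig A (lam : ℂ) → 0 < lam := by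
  constructor
  · rintro ⟨B, c, hB, hc, hAB⟩ lam hlam
    have hle := (hYY B hB).2 _ ((isEig_iff_of_eq_smul_idT_sub hAB lam).1 hlam)
    rw [← Complex.ofReal_sub, Complex.norm_real, Real.norm_eq_abs] at hle
    linarith [le_abs_self (c - lam)]
  · intro hpos
    set c : ℝ := ∑ i, |A i (fun _ => i)|
    have hdiag : ∀ i, A i (fun _ => i) ≤ c := fun i =>
      (le_abs_self _).trans
        (Finset.single_le_sum (fun i _ => abs_nonneg (A i fun _ => i)) (Finset.mem_univ i))
    set B : Fin n → (Fin k → Fin n) → ℝ := fun i j => c * idT n k i j - A i j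
    have hB : NonnegT B := hZ.nonnegT_smul_idT_sub hdiag
    have hAB : ∀ i j, A i j = c * idT n k i j - B i j := fun i j => by ring
    have hρ : IsEig A ((c - specRad B : ℝ) : ℂ) := by
      rw [isEig_iff_of_eq_smul_idT_sub hAB, Complex.ofReal_sub, sub_sub_cancel]
      exact (hYY B hB).1
    exact ⟨B, c, hB, by linarith [hpos _ hρ], hAB⟩
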